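/- Let a<b be reals, q > 1 a real number, and f ∈ C¹([a,b],ℝ) a function admitting a zero z ∈ [a,b] (i.e. f(z)=0). Then sup_{t∈[a,b]} |f(t)| ≤ q^{1/q} ( ∫_a^b |f(s)|^q ds + ∫_a^b |f'(s)|^q ds )^{1/q}. -/

import Mathlib

/-!
Since `q > 1`, the function `|f|^q` is `C¹` with derivative `q |f|^(q-2) f f'`, whose absolute
value is `q |f|^(q-1) |f'| ≤ q (|f|^q + |f'|^q)` (compare with `max (|f|, |f'|)^q`).
Integrating from the zero `z` of `f` to `t` gives `|f t|^q ≤ q (∫ |f|^q + ∫ |f'|^q)`;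
take `q`-th roots.
-/

open MeasureTheory Set

lemma rpow_sub_one_mul_le_rpow_add_rpow {q x y : ℝ} (hq : 1 ≤ q) (hx : 0 ≤ x) (hy : 0 ≤ y) :
    x ^ (q - 1) * y ≤ x ^ q + y ^ q := by
  have hq1 : 0 ≤ q - 1 := by linarith
  have hq' : q - 1 + 1 ≠ 0 := by linarith
  rcases le_total x y with hxy | hyx
  · calc x ^ (q - 1) * y ≤ y ^ (q - 1) * y := by gcongr
      _ = y ^ q := by rw [← Real.rpow_add_one' hy hq', sub_add_cancel]
      _ ≤ x ^ q + y ^ q := le_add_of_nonneg_left (by positivity)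
  · calc x ^ (q - 1) * y ≤ x ^ (q - 1) * x := by gcongr
      _ = x ^ q := by rw [← Real.rpow_add_one' hx hq', sub_add_cancel]
      _ ≤ x ^ q + y ^ q := le_add_of_nonneg_right (by positivity)

lemma abs_mul_deriv_abs_rpow_le {q : ℝ} (hq : 1 < q) (x y : ℝ) :
    |q * |x| ^ (q - 2) * x * y| ≤ q * (|x| ^ q + |y| ^ q) := by
  have hq0 : 0 < q := by linarith
  calc |q * |x| ^ (q - 2) * x * y| = q * (|x| ^ (q - 1) * |y|) := by
        rw [show q - 1 = q - 2 + 1 by ring, Real.rpow_add_one' (abs_nonneg x) (by linarith),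
          abs_mul, abs_mul, abs_mul, abs_of_pos hq0, abs_of_nonneg (by positivity)]
        ring
    _ ≤ q * (|x| ^ q + |y| ^ q) := by
        gcongr
        exact rpow_sub_one_mul_le_rpow_add_rpow hq.le (abs_nonneg x) (abs_nonneg y)

theorem abs_sub_le_integral_of_hasDerivAt_of_abs_le {g g' φ : ℝ → ℝ} {a b : ℝ}
    (hab : a ≤ b) (hcont : ContinuousOn g (Icc a b))
    (hderiv : ∀ x ∈ Ioo a b, HasDerivAt g (g' x) x)
    (hφ : IntegrableOn φ (Icc a b)) (hg'φ : ∀ x ∈ Ioo a b, |g' x| ≤ φ x) :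
    |g b - g a| ≤ ∫ y in a..b, φ y := by
  rw [abs_sub_le_iff]
  constructor
  · exact intervalIntegral.sub_le_integral_of_hasDeriv_right_of_le hab hcont
      (fun x hx => (hderiv x hx).hasDerivWithinAt) hφ
      fun x hx => (le_abs_self _).trans (hg'φ x hx)
  · have := intervalIntegral.sub_le_integral_of_hasDeriv_right_of_le hab hcont.neg
      (fun x hx => (hderiv x hx).neg.hasDerivWithinAt) hφ
      fun x hx => (neg_le_abs _).trans (hg'φ x hx)
    rwa [Pi.neg_apply, Pi.neg_apply, neg_sub_neg] at this

lemma abs_sub_abs_rpow_le_integral {q u v : ℝ} (hq : 1 < q) (huv : u ≤ v) {f f' : ℝ → ℝ}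
    (hf : ContinuousOn f (Icc u v)) (hderiv : ∀ x ∈ Ioo u v, HasDerivAt f (f' x) x)
    (hint : IntegrableOn (fun s => |f s| ^ q + |f' s| ^ q) (Icc u v)) :
    |(|f v| ^ q - |f u| ^ q)| ≤ q * ∫ s in u..v, (|f s| ^ q + |f' s| ^ q) := by
  rw [← intervalIntegral.integral_const_mul]
  exact abs_sub_le_integral_of_hasDerivAt_of_abs_le huv
    (((Real.continuous_rpow_const (by linarith)).comp continuous_abs).comp_continuousOn hf)
    (fun x hx => (hasDerivAt_abs_rpow (f x) hq).comp x (hderiv x hx)) (hint.const_mul q)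
    fun x _ => abs_mul_deriv_abs_rpow_le hq (f x) (f' x)

lemma abs_rpow_le_of_eq_zero {a b q : ℝ} (hq : 1 < q) {f f' : ℝ → ℝ}
    (hderiv : ∀ x ∈ Icc a b, HasDerivWithinAt f (f' x) (Icc a b) x)
    (hcont : ContinuousOn f' (Icc a b)) {z t : ℝ} (hz : z ∈ Icc a b) (hfz : f z = 0)
    (ht : t ∈ Icc a b) :
    |f t| ^ q ≤ q * ((∫ s in a..b, |f s| ^ q) + ∫ s in a..b, |f' s| ^ q) := by
  have hab : a ≤ b := hz.1.trans hz.2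
  have hf : ContinuousOn f (Icc a b) := fun x hx => (hderiv x hx).continuousWithinAt
  have hrpow : Continuous fun y : ℝ => |y| ^ q :=
    (Real.continuous_rpow_const (by linarith)).comp continuous_abs
  have hIf : IntervalIntegrable (fun s => |f s| ^ q) volume a b :=
    (hrpow.comp_continuousOn hf).intervalIntegrable_of_Icc hab
  have hIf' : IntervalIntegrable (fun s => |f' s| ^ q) volume a b :=
    (hrpow.comp_continuousOn hcont).intervalIntegrable_of_Icc hab
  have hint : IntegrableOn (fun s => |f s| ^ q + |f' s| ^ q) (Icc a b) :=
    ((hrpow.comp_continuousOn hf).add (hrpow.comp_continuousOn hcont)).integrableOn_compact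
      isCompact_Icc
  have hsub : ∀ u ∈ Icc a b, ∀ v ∈ Icc a b, u ≤ v →
      |(|f v| ^ q - |f u| ^ q)| ≤ q * ∫ s in a..b, (|f s| ^ q + |f' s| ^ q) := by
    intro u hu v hv huv
    have huvab : Icc u v ⊆ Icc a b := Icc_subset_Icc hu.1 hv.2
    refine (abs_sub_abs_rpow_le_integral hq huv (hf.mono huvab) (fun x hx => ?_)
      (hint.mono_set huvab)).trans ?_
    · exact (hderiv x (huvab (Ioo_subset_Icc_self hx))).hasDerivAt
        (Icc_mem_nhds (hu.1.trans_lt hx.1) (hx.2.trans_le hv.2))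
    · gcongr
      exact intervalIntegral.integral_mono_interval hu.1 huv hv.2
        (Filter.Eventually.of_forall fun _ => by positivity) (hIf.add hIf')
  rw [← intervalIntegral.integral_add hIf hIf']
  have hfz' : |f z| ^ q = 0 := by rw [hfz, abs_zero, Real.zero_rpow (by linarith)]
  rcases le_total z t with hzt | htz
  · simpa [hfz'] using (le_abs_self _).trans (hsub z hz t ht hzt)
  · simpa [hfz'] using (neg_le_abs _).trans (hsub t ht z hz htz)

theorem statement18
    (a b : ℝ) (q : ℝ) (hq : 1 < q) (f f' : ℝ → ℝ)
    (hderiv : ∀ x ∈ Set.Icc a b, HasDerivWithinAt f (f' x) (Set.Icc a b) x)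
    (hcont : ContinuousOn f' (Set.Icc a b))
    (hzero : ∃ z ∈ Set.Icc a b, f z = 0) :
    sSup ((fun t => |f t|) '' Set.Icc a b) ≤
      q ^ (1 / q) *
        ((∫ s in a..b, |f s| ^ q) + ∫ s in a..b, |f' s| ^ q) ^ (1 / q) := by
  obtain ⟨z, hz, hfz⟩ := hzero
  have hq0 : 0 < q := by linarith
  refine csSup_le ⟨_, mem_image_of_mem _ hz⟩ ?_
  rintro _ ⟨t, ht, rfl⟩
  have key := abs_rpow_le_of_eq_zero hq hderiv hcont hz hfz ht
  have hI : 0 ≤ (∫ s in a..b, |f s| ^ q) + ∫ s in a..b, |f' s| ^ q :=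
    nonneg_of_mul_nonneg_right ((by positivity : 0 ≤ |f t| ^ q).trans key) hq0
  rw [← Real.mul_rpow hq0.le hI, one_div,
    Real.le_rpow_inv_iff_of_pos (abs_nonneg _) (by positivity) hq0]
  exact key
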